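/- The numbers O(n,g) of permutations of [n] with exactly n-2g odd cycles satisfy the three-term recurrence O(n+1,g) = O(n,g) + n(n-1)·O(n-1,g-1). -/

import Mathlib

open Finset Polynomial

/-- Number of cycles (including fixed points) of a permutation of a finite type. -/
def cycleCount {α : Type*} [Fintype α] [DecidableEq α] (σ : Equiv.Perm α) : ℕ :=
  Multiset.card σ.cycleType + (Fintype.card α - σ.cycleType.sum)

/-- Unsigned Stirling number of the first kind: the number of permutations of an
`m`-element set with exactly `i` cycles. -/
noncomputable def stirC (m i : ℕ) : ℕ :=
  Nat.card {σ : Equiv.Perm (Fin m) // cycleCount σ = i}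

/-- `O(m, g)`: the number of permutations of an `m`-element set all of whose cycles
are odd and which have exactly `m - 2g` cycles. -/
noncomputable def oddCyclePermCount (m : ℕ) (g : ℤ) : ℕ :=
  Nat.card {σ : Equiv.Perm (Fin m) //
    (∀ l ∈ σ.cycleType, Odd l) ∧ (cycleCount σ : ℤ) = (m : ℤ) - 2 * g}

/-! Split the permutations of `n + 1` points according to whether a chosen point `l` is fixed.
Those fixing `l` are the permutations of the other `n` points. Otherwise the cycle through `l` is
odd, hence of length at least 3, so `a = σ⁻¹ l`, `l`, `b = σ l` are distinct and
`σ = (a l b) * η` with `η` fixing `a` and `l`: deleting `a` and `l` from that cycle shortens it by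
two (a 3-cycle becomes the fixed point `b`), which keeps every cycle odd and lowers `g` by one.
Conversely, multiplying such an `η` by `(a l b)` inserts `l` and `a` back into the cycle of `b`,
so the second class consists of the `n (n - 1)` ordered pairs `(a, b)` of distinct points other
than `l`, each with `O(n - 1, g - 1)` choices of `η`. -/

open Equiv Equiv.Perm

namespace Equiv.Perm

variable {α : Type*} [DecidableEq α] [Fintype α]

theorem IsCycle.swap_mul_of_notMem_support {c : Perm α} (hc : c.IsCycle) {x y : α}
    (hx : x ∈ c.support) (hy : y ∉ c.support) :
    (swap y x * c).IsCycle ∧ (swap y x * c).support = insert y c.support := by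
  set L := c.toList x
  have hL : L.formPerm = c := by rw [formPerm_toList, hc.cycleOf_eq (mem_support.mp hx)]
  have hlen : 2 ≤ L.length := two_le_length_toList_iff_mem_support.mpr hx
  have hcons : L = x :: L.tail := by
    rcases hL' : L with _ | ⟨z, t⟩
    · simp [hL'] at hlen
    · have := toList_getElem_zero c x hx
      simp_all [L]
  have hyL : y ∉ L := fun h =>
    hy ((mem_toList_iff.mp h).1.mem_support_iff.mp hx)
  have hnodup : (y :: L).Nodup := List.nodup_cons.mpr ⟨hyL, nodup_toList c x⟩
  have hform : (y :: L).formPerm = swap y x * c := by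
    rw [hcons, List.formPerm_cons_cons, ← hcons, hL]
  rw [← hform]
  refine ⟨List.isCycle_formPerm hnodup (by simp only [List.length_cons]; omega), ?_⟩
  have hLne : ∀ z, L ≠ [z] := fun z hz => by simp [hz] at hlen
  rw [List.support_formPerm_of_nodup _ hnodup (fun z => by rw [hcons]; simp), List.toFinset_cons,
    ← hL, List.support_formPerm_of_nodup _ (nodup_toList c x) hLne]

theorem cycleType_swap_mul_swap_mul_of_apply_eq {a b l : α} (hab : a ≠ b) (hal : a ≠ l)
    (hbl : b ≠ l) {η : Perm α} (ha : η a = a) (hb : η b = b) (hl : η l = l) :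
    (swap a l * swap l b * η).cycleType = 3 ::ₘ η.cycleType := by
  have hthree : (swap a l * swap l b).IsThreeCycle := by
    rw [swap_comm a l]
    exact isThreeCycle_swap_mul_swap_same hal.symm hbl.symm hab
  have hdisj : Disjoint (swap a l * swap l b) η := by
    intro x
    by_cases hx : x = a ∨ x = b ∨ x = l
    · right
      rcases hx with rfl | rfl | rfl <;> assumption
    · left
      push Not at hx
      simp [swap_apply_of_ne_of_ne, hx.1, hx.2.1, hx.2.2]
  rw [hdisj.cycleType_mul, hthree.cycleType]
  rfl

theorem cycleType_swap_mul_swap_mul_of_apply_ne {a b l : α} (hal : a ≠ l) {η : Perm α}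
    (ha : η a = a) (hb : η b ≠ b) (hl : η l = l) :
    ∃ N k, (swap a l * swap l b * η).cycleType = (k + 2) ::ₘ N ∧ η.cycleType = k ::ₘ N := by
  set c := η.cycleOf b
  set ρ := η * c⁻¹
  have hc : c.IsCycle := isCycle_cycleOf η hb
  have hbc : b ∈ c.support := by rw [mem_support, cycleOf_apply_self]; exact hb
  have hac : a ∉ c.support := fun h => mem_support.mp (support_cycleOf_le η b h) ha
  have hlc : l ∉ c.support := fun h => mem_support.mp (support_cycleOf_le η b h) hl
  have hρc : Disjoint ρ c := disjoint_mul_inv_of_mem_cycleFactorsFinset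
    (cycleOf_mem_cycleFactorsFinset_iff.mpr (mem_support.mpr hb))
  have hη : η = c * ρ := by rw [← hρc.commute.eq]; exact (inv_mul_cancel_right η c).symm
  obtain ⟨hc₁, hsupp₁⟩ := hc.swap_mul_of_notMem_support hbc hlc
  obtain ⟨hc₂, hsupp₂⟩ := hc₁.swap_mul_of_notMem_support (x := l) (y := a)
    (by rw [hsupp₁]; exact Finset.mem_insert_self _ _) (by rw [hsupp₁]; simp [hal, hac])
  have hdisj : Disjoint (swap a l * (swap l b * c)) ρ := by
    have hρsupp : ρ.support ⊆ η.support ∪ c.support := by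
      simpa only [support_inv, Finset.sup_eq_union] using support_mul_le η c⁻¹
    rw [disjoint_iff_disjoint_support, hsupp₂, hsupp₁, Finset.disjoint_insert_left,
      Finset.disjoint_insert_left]
    exact ⟨fun h => by simpa [ha, hac] using hρsupp h, fun h => by simpa [hl, hlc] using hρsupp h,
      (disjoint_iff_disjoint_support.mp hρc).symm⟩
  refine ⟨ρ.cycleType, c.support.card, ?_, ?_⟩
  · rw [hη, ← mul_assoc, mul_assoc (swap a l), hdisj.cycleType_mul, hc₂.cycleType, hsupp₂, hsupp₁,
      Finset.card_insert_of_notMem (by simp [hal, hac]), Finset.card_insert_of_notMem hlc]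
    rfl
  · rw [hη, hρc.symm.cycleType_mul, hc.cycleType]
    rfl

theorem apply_apply_ne_self_of_forall_odd {σ : Perm α} (hodd : ∀ k ∈ σ.cycleType, Odd k) {x : α}
    (hx : σ x ≠ x) : σ (σ x) ≠ x := by
  intro hxx
  set c := σ.cycleOf x
  have hc : c.IsCycle := isCycle_cycleOf σ hx
  have hcx : c x ≠ x := by rwa [cycleOf_apply_self]
  have hswap : c = swap x (c x) :=
    hc.eq_swap_of_apply_apply_eq_self hcx (by rwa [cycleOf_apply_self, cycleOf_apply_apply_self])
  have hmem : c.support.card ∈ σ.cycleType := by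
    rw [cycleType_def]
    exact Multiset.mem_map_of_mem _ (cycleOf_mem_cycleFactorsFinset_iff.mpr (mem_support.mpr hx))
  have := hodd _ hmem
  rw [hswap, card_support_swap hcx.symm] at this
  exact Nat.not_odd_iff_even.mpr even_two this

theorem cycleType_permCongr {β : Type*} [DecidableEq β] [Fintype β] (e : α ≃ β) (σ : Perm α) :
    (e.permCongr σ).cycleType = σ.cycleType := by
  set f : α ≃ {b : β // True} := e.trans (subtypeUnivEquiv fun _ => trivial).symm
  convert cycleType_extendDomain f (g := σ) using 2
  ext x
  obtain ⟨a, rfl⟩ := e.surjective x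
  simpa [f] using (extendDomain_apply_image σ f a).symm

end Equiv.Perm

/-- A permutation of an `m`-element set with cycle type `M` (which omits fixed points) has
`m - (M.sum - card M)` cycles, so "`m - 2g` cycles, all odd" is a condition on `M` alone,
independent of `m`. -/
def IsOddGenusType (g : ℤ) (M : Multiset ℕ) : Prop :=
  (∀ k ∈ M, Odd k) ∧ (M.sum : ℤ) - Multiset.card M = 2 * g

instance (g : ℤ) : DecidablePred (IsOddGenusType g) := fun _ => by
  unfold IsOddGenusType
  infer_instance

section Counting

variable {α : Type*} [DecidableEq α] [Fintype α]

theorem isOddGenusType_swap_mul_swap_mul_iff {a b l : α} (hab : a ≠ b) (hal : a ≠ l)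
    (hbl : b ≠ l) {η : Perm α} (ha : η a = a) (hl : η l = l) (g : ℤ) :
    IsOddGenusType g (swap a l * swap l b * η).cycleType ↔ IsOddGenusType (g - 1) η.cycleType := by
  by_cases hb : η b = b
  · rw [cycleType_swap_mul_swap_mul_of_apply_eq hab hal hbl ha hb hl]
    simp only [IsOddGenusType, Multiset.forall_mem_cons, Multiset.sum_cons, Multiset.card_cons,
      Nat.cast_add, Nat.cast_one, Nat.cast_ofNat]
    exact ⟨fun ⟨⟨_, hodd⟩, hsum⟩ => ⟨hodd, by omega⟩,
      fun ⟨hodd, hsum⟩ => ⟨⟨by decide, hodd⟩, by omega⟩⟩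
  · obtain ⟨N, k, hσ, hη⟩ := cycleType_swap_mul_swap_mul_of_apply_ne hal ha hb hl
    rw [hσ, hη]
    simp only [IsOddGenusType, Multiset.forall_mem_cons, Multiset.sum_cons, Multiset.card_cons,
      Nat.cast_add, Nat.cast_one, Nat.cast_ofNat, Nat.odd_add, even_two, iff_true]
    exact ⟨fun ⟨hodd, hsum⟩ => ⟨hodd, by omega⟩, fun ⟨hodd, hsum⟩ => ⟨hodd, by omega⟩⟩

theorem cast_cycleCount_eq_iff (σ : Perm α) (g : ℤ) :
    (cycleCount σ : ℤ) = Fintype.card α - 2 * g ↔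
      (σ.cycleType.sum : ℤ) - Multiset.card σ.cycleType = 2 * g := by
  have hsum : σ.cycleType.sum ≤ Fintype.card α := by
    rw [sum_cycleType]
    exact card_le_univ _
  rw [cycleCount, Nat.cast_add, Nat.cast_sub hsum]
  omega

theorem oddCyclePermCount_card_eq (β : Type*) [DecidableEq β] [Fintype β] (g : ℤ) :
    oddCyclePermCount (Fintype.card β) g = #{σ : Perm β | IsOddGenusType g σ.cycleType} := by
  rw [oddCyclePermCount, Nat.card_eq_fintype_card, ← Fintype.card_subtype]
  refine Fintype.card_congr ((Fintype.equivFin β).symm.permCongr.subtypeEquiv fun σ => ?_)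
  rw [cycleType_permCongr, IsOddGenusType, ← cast_cycleCount_eq_iff, Fintype.card_fin]

theorem card_isOddGenusType_fixing (s : Finset α) (g : ℤ) :
    #{σ : Perm α | (∀ x ∈ s, σ x = x) ∧ IsOddGenusType g σ.cycleType} =
      oddCyclePermCount (Fintype.card α - #s) g := by
  have hcard : Fintype.card α - #s = Fintype.card {x // x ∉ s} := by
    rw [Fintype.card_subtype_compl, Fintype.card_coe]
  rw [hcard, oddCyclePermCount_card_eq, ← Fintype.card_subtype, ← Fintype.card_subtype]
  refine Fintype.card_congr ((((Perm.subtypeEquivSubtypePerm (· ∉ s)).subtypeEquiv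
    (q := fun σ => IsOddGenusType g σ.1.cycleType) fun τ => ?_).trans
    (subtypeSubtypeEquivSubtypeInter _ fun σ : Perm α => IsOddGenusType g σ.cycleType)).trans
    (subtypeEquivRight fun σ => ?_)).symm
  · rw [subtypeEquivSubtypePerm_apply_coe, cycleType_ofSubtype]
  · simp only [not_not]

theorem card_isOddGenusType_inv_apply_apply {a b l : α} (hab : a ≠ b) (hal : a ≠ l) (hbl : b ≠ l)
    (g : ℤ) :
    #{σ : Perm α | IsOddGenusType g σ.cycleType ∧ σ⁻¹ l = a ∧ σ l = b} =
      oddCyclePermCount (Fintype.card α - 2) (g - 1) := by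
  set t := swap a l * swap l b
  have hta : t a = l := by simp [t, swap_apply_of_ne_of_ne hal hab]
  have htl : t l = b := by simp [t, swap_apply_of_ne_of_ne hab.symm hbl]
  rw [← card_pair hal, ← card_isOddGenusType_fixing]
  refine card_nbij' (t⁻¹ * ·) (t * ·) ?_ ?_ (fun σ _ => mul_inv_cancel_left t σ)
    (fun η _ => inv_mul_cancel_left t η)
  · intro σ hσ
    simp only [mem_coe, mem_filter, mem_univ, true_and, mem_insert, mem_singleton,
      forall_eq_or_imp, forall_eq] at hσ ⊢
    obtain ⟨hodd, hσa, hσl⟩ := hσ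
    rw [inv_eq_iff_eq] at hσa
    have hηa : (t⁻¹ * σ) a = a := by rw [mul_apply, ← hσa, inv_eq_iff_eq, hta]
    have hηl : (t⁻¹ * σ) l = l := by rw [mul_apply, hσl, inv_eq_iff_eq, htl]
    refine ⟨⟨hηa, hηl⟩, (isOddGenusType_swap_mul_swap_mul_iff hab hal hbl hηa hηl g).mp ?_⟩
    rwa [mul_inv_cancel_left]
  · intro η hη
    simp only [mem_coe, mem_filter, mem_univ, true_and, mem_insert, mem_singleton,
      forall_eq_or_imp, forall_eq] at hη ⊢
    obtain ⟨⟨hηa, hηl⟩, hodd⟩ := hη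
    refine ⟨(isOddGenusType_swap_mul_swap_mul_iff hab hal hbl hηa hηl g).mpr hodd, ?_, ?_⟩
    · rw [inv_eq_iff_eq, mul_apply, hηa, hta]
    · rw [mul_apply, hηl, htl]

theorem card_isOddGenusType_apply_ne_self (l : α) (g : ℤ) :
    #{σ : Perm α | IsOddGenusType g σ.cycleType ∧ σ l ≠ l} =
      (Fintype.card α - 1) * (Fintype.card α - 2) *
        oddCyclePermCount (Fintype.card α - 2) (g - 1) := by
  rw [card_eq_sum_card_fiberwise (f := fun σ => (σ⁻¹ l, σ l)) (t := (univ.erase l).offDiag),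
    sum_congr rfl fun ab hab => ?_, sum_const, smul_eq_mul, offDiag_card,
    card_erase_of_mem (mem_univ l), card_univ, ← Nat.mul_sub_one, Nat.sub_sub]
  · obtain ⟨a, b⟩ := ab
    simp only [mem_offDiag, mem_erase, mem_univ, and_true] at hab
    obtain ⟨hal, hbl, hab⟩ := hab
    rw [filter_filter, ← card_isOddGenusType_inv_apply_apply hab hal hbl g]
    congr 1
    refine filter_congr fun σ _ => ?_
    simp only [Prod.mk.injEq]
    constructor
    · rintro ⟨⟨hodd, -⟩, hσ⟩
      exact ⟨hodd, hσ⟩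
    · rintro ⟨hodd, hσa, hσb⟩
      exact ⟨⟨hodd, hσb ▸ hbl⟩, hσa, hσb⟩
  · intro σ hσ
    simp only [mem_coe, mem_filter, mem_univ, true_and] at hσ
    obtain ⟨hodd, hσl⟩ := hσ
    have hσσ := apply_apply_ne_self_of_forall_odd hodd.1 hσl
    simp only [mem_coe, mem_offDiag, mem_erase, mem_univ, and_true, ne_eq, inv_eq_iff_eq]
    exact ⟨fun h => hσl h.symm, hσl, fun h => hσσ h.symm⟩

theorem oddCyclePermCount_card_eq_add (l : α) (g : ℤ) :
    oddCyclePermCount (Fintype.card α) g =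
      oddCyclePermCount (Fintype.card α - 1) g +
        (Fintype.card α - 1) * (Fintype.card α - 2) *
          oddCyclePermCount (Fintype.card α - 2) (g - 1) := by
  rw [oddCyclePermCount_card_eq, ← card_filter_add_card_filter_not (fun σ : Perm α => σ l = l),
    filter_filter, filter_filter, ← card_isOddGenusType_apply_ne_self l g, ← card_singleton l,
    ← card_isOddGenusType_fixing]
  congr 2
  ext σ
  simp [and_comm]

end Counting

/-- Three-term recurrence `O(n+1,g) = O(n,g) + n(n-1)·O(n-1,g-1)`
(with `O(m,g) = 0` when `g < 0` or `m - 2g < 0`). -/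
theorem stmt3 (n : ℕ) (g : ℤ) :
    oddCyclePermCount (n + 1) g =
      oddCyclePermCount n g + n * (n - 1) * oddCyclePermCount (n - 1) (g - 1) := by
  simpa using oddCyclePermCount_card_eq_add (Fin.last n) g
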